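/- arXiv:2507.00194 — 2 statements merged into one kernel-verified Lean document; each statement's English description precedes it below -/
import Mathlib

section
/- Let n ≥ 2, let p₁, …, pₙ be varying S-probabilities with p₁ + ⋯ + pₙ = 1 (the constant function 1), and let P := {Σ_{i∈I} pᵢ : I ⊆ {1, …, n}} be the resulting Boolean algebra of S-probabilities with 2^n elements. Let q be a varying S-probability with q ≤ p₁, q ≠ p₁, such that p₁ − q is varying. Then q ∉ P and q is not critical: there exists a Boolean algebra Q of S-probabilities (with 2^{n+1} elements) such that P ∪ {q} ⊆ Q. -/
/-- An `S`-probability: a function `p : S → ℝ` with `0 ≤ p s ≤ 1` for all `s`. -/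
def IsProb (S : Type*) (p : S → ℝ) : Prop := ∀ s, 0 ≤ p s ∧ p s ≤ 1

/-- An algebra of `S`-probabilities: a set of `S`-probabilities containing the constant `0`,
closed under `p ↦ 1 - p`, and containing `p + q + r` for pairwise orthogonal `p, q, r`
(where `p ⊥ q` means `p ≤ 1 - q`). -/
def IsAlg (S : Type*) (P : Set (S → ℝ)) : Prop :=
  (∀ p ∈ P, IsProb S p) ∧
  (0 : S → ℝ) ∈ P ∧
  (∀ p ∈ P, 1 - p ∈ P) ∧
  ∀ p q r : S → ℝ, p ∈ P → q ∈ P → r ∈ P →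
    p ≤ 1 - q → q ≤ 1 - r → r ≤ 1 - p → p + q + r ∈ P

/-- A function `p : S → ℝ` is varying if it is neither everywhere `≤ 1/2`
nor everywhere `≥ 1/2`. -/
def Varying (S : Type*) (p : S → ℝ) : Prop :=
  ¬(∀ s, p s ≤ 1 / 2) ∧ ¬(∀ s, 1 / 2 ≤ p s)

/-- `m` is the infimum of `p` and `q` within the poset `(P, ≤)`. -/
def IsInfIn (S : Type*) (P : Set (S → ℝ)) (p q m : S → ℝ) : Prop :=
  m ∈ P ∧ m ≤ p ∧ m ≤ q ∧ ∀ u ∈ P, u ≤ p → u ≤ q → u ≤ m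

/-- `j` is the supremum of `p` and `q` within the poset `(P, ≤)`. -/
def IsSupIn (S : Type*) (P : Set (S → ℝ)) (p q j : S → ℝ) : Prop :=
  j ∈ P ∧ p ≤ j ∧ q ≤ j ∧ ∀ u ∈ P, p ≤ u → q ≤ u → j ≤ u

/-- A Boolean algebra of `S`-probabilities: an algebra of `S`-probabilities in which any two
elements have an infimum and a supremum within `(P, ≤)`, the resulting lattice is distributive,
and for every `p ∈ P` the infimum of `p` and `1 - p` is `0` and their supremum is `1`. -/
def IsBooleanAlg (S : Type*) (P : Set (S → ℝ)) : Prop :=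
  IsAlg S P ∧
  (∀ p ∈ P, ∀ q ∈ P, (∃ m, IsInfIn S P p q m) ∧ (∃ j, IsSupIn S P p q j)) ∧
  (∀ p ∈ P, ∀ q ∈ P, ∀ r ∈ P, ∀ qr a pq pr b : S → ℝ,
    IsSupIn S P q r qr → IsInfIn S P p qr a →
    IsInfIn S P p q pq → IsInfIn S P p r pr → IsSupIn S P pq pr b → a = b) ∧
  ∀ p ∈ P, IsInfIn S P p (1 - p) 0 ∧ IsSupIn S P p (1 - p) 1

/-- The extension `(p, c)` of `p : S → ℝ` to `S̄ = S ∪ {s̄}` (modelled as `Option S`,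
with `none` playing the role of the new state `s̄`), taking the value `c` at `s̄`. -/
def extFun {S : Type*} (p : S → ℝ) (c : ℝ) : Option S → ℝ :=
  fun x => Option.elim x c p

/-- The `0,1`-extension `P̄ = {(p,0) : p ∈ P} ∪ {(p,1) : p ∈ P}` of a set `P` of
`S`-probabilities. -/
def extSet {S : Type*} (P : Set (S → ℝ)) : Set (Option S → ℝ) :=
  {f | ∃ p ∈ P, f = extFun p 0 ∨ f = extFun p 1}

/-- `p` and `q` are partially reciprocal below `1/2`. -/
def PRBelow (S : Type*) (p q : S → ℝ) : Prop := ∀ s, min (p s) (q s) ≤ 1 / 2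

/-- `p` and `q` are partially reciprocal above `1/2`. -/
def PRAbove (S : Type*) (p q : S → ℝ) : Prop := ∀ s, 1 / 2 ≤ max (p s) (q s)

/-- `p` and `q` are reciprocal. -/
def Reciprocal (S : Type*) (p q : S → ℝ) : Prop := PRBelow S p q ∧ PRAbove S p q

/-- Two functions are incomparable in the pointwise order. -/
def Incomp {S : Type*} (a b : S → ℝ) : Prop := ¬a ≤ b ∧ ¬b ≤ a

/-- An algebra of `S`-probabilities of type `MO₂`,
with the six pairwise distinct elements `0, p₁, 1 - p₁, p₂, 1 - p₂, 1` such that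
`p₁, 1 - p₁, p₂, 1 - p₂` are pairwise incomparable. -/
def IsMO2 (S : Type*) (P : Set (S → ℝ)) (p1 p2 : S → ℝ) : Prop :=
  IsAlg S P ∧
  P = {0, p1, 1 - p1, p2, 1 - p2, 1} ∧
  ([(0 : S → ℝ), p1, 1 - p1, p2, 1 - p2, 1].Pairwise (· ≠ ·)) ∧
  Incomp p1 (1 - p1) ∧ Incomp p1 p2 ∧ Incomp p1 (1 - p2) ∧
  Incomp (1 - p1) p2 ∧ Incomp (1 - p1) (1 - p2) ∧ Incomp p2 (1 - p2)

/-- `f` is an atom of `P`: a minimal element of `P \ {0}`. -/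
def IsAtomOf (S : Type*) (P : Set (S → ℝ)) (f : S → ℝ) : Prop :=
  f ∈ P ∧ f ≠ 0 ∧ ∀ g ∈ P, g ≠ 0 → g ≤ f → g = f


/-!
Cutting `p₁` into `q` and `p₁ - q` gives again a partition of unity `q, p₁ - q, p₂, …, pₙ`
into `n + 1` pieces, each exceeding `1/2` somewhere. For any such partition the subset sums
`σ I = ∑ i ∈ I, rᵢ` satisfy `σ I ≤ σ J ↔ I ⊆ J`: a piece `r_k` with `k ∈ I \ J` exceeds `1/2` at
some state, where `σ J ≤ 1 - r_k` is below `1/2`. Hence `I ↦ σ I` is an order isomorphism from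
the power set onto the subset sums, which therefore form a Boolean algebra with `2^(n+1)`
elements, containing every subset sum of the `pᵢ` and `q` itself. The same order embedding shows
`q ∉ P`: from `q = σ I ≤ p₁` we get `I ⊆ {1}`, while `q ≠ 0` and `q ≠ p₁`.
-/

section SubsetSums

open Finset

variable {S ι : Type*}

def subsetSums (r : ι → S → ℝ) : Set (S → ℝ) := {f | ∃ I : Finset ι, f = ∑ i ∈ I, r i}

lemma sum_mem_subsetSums (r : ι → S → ℝ) (I : Finset ι) : ∑ i ∈ I, r i ∈ subsetSums r :=
  ⟨I, rfl⟩

lemma IsInfIn.unique {P : Set (S → ℝ)} {p q a b : S → ℝ}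
    (ha : IsInfIn S P p q a) (hb : IsInfIn S P p q b) : a = b :=
  le_antisymm (hb.2.2.2 a ha.1 ha.2.1 ha.2.2.1) (ha.2.2.2 b hb.1 hb.2.1 hb.2.2.1)

lemma IsSupIn.unique {P : Set (S → ℝ)} {p q a b : S → ℝ}
    (ha : IsSupIn S P p q a) (hb : IsSupIn S P p q b) : a = b :=
  le_antisymm (ha.2.2.2 b hb.1 hb.2.1 hb.2.2.1) (hb.2.2.2 a ha.1 ha.2.1 ha.2.2.1)

lemma Varying.exists_half_lt {p : S → ℝ} (h : Varying S p) : ∃ s, 1 / 2 < p s := by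
  simpa using h.1

section Partition

variable [Fintype ι] [DecidableEq ι] {r : ι → S → ℝ}

lemma sum_compl_eq_one_sub (hsum : ∑ i, r i = 1) (I : Finset ι) :
    ∑ i ∈ Iᶜ, r i = 1 - ∑ i ∈ I, r i := by
  rw [← hsum, ← sum_add_sum_compl I r, add_sub_cancel_left]

variable (hnn : ∀ i, 0 ≤ r i) (hsum : ∑ i, r i = 1) (hbig : ∀ i, ∃ s, 1 / 2 < r i s)
include hnn hsum hbig

lemma subset_of_sum_le_sum {I J : Finset ι} (h : ∑ i ∈ I, r i ≤ ∑ i ∈ J, r i) : I ⊆ J := by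
  intro k hkI
  by_contra hkJ
  obtain ⟨s, hs⟩ := hbig k
  have hI : r k ≤ ∑ i ∈ I, r i := single_le_sum (fun i _ => hnn i) hkI
  have hJ : ∑ i ∈ J, r i ≤ 1 - r k := calc
    ∑ i ∈ J, r i ≤ ∑ i ∈ {k}ᶜ, r i :=
      sum_le_sum_of_subset_of_nonneg (by simpa using hkJ) (fun i _ _ => hnn i)
    _ = 1 - r k := by rw [sum_compl_eq_one_sub hsum, sum_singleton]
  have := (hI.trans (h.trans hJ)) s
  simp only [Pi.sub_apply, Pi.one_apply] at this
  linarith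

lemma sum_le_sum_iff_subset {I J : Finset ι} :
    ∑ i ∈ I, r i ≤ ∑ i ∈ J, r i ↔ I ⊆ J :=
  ⟨subset_of_sum_le_sum hnn hsum hbig, fun h => sum_le_sum_of_subset_of_nonneg h
    (fun i _ _ => hnn i)⟩

lemma isInfIn_sum_inter (I J : Finset ι) :
    IsInfIn S (subsetSums r) (∑ i ∈ I, r i) (∑ i ∈ J, r i) (∑ i ∈ I ∩ J, r i) := by
  have hiff := @sum_le_sum_iff_subset _ _ _ _ _ hnn hsum hbig
  refine ⟨sum_mem_subsetSums r _, hiff.2 inter_subset_left, hiff.2 inter_subset_right, ?_⟩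
  rintro _ ⟨K, rfl⟩ hKI hKJ
  exact hiff.2 (subset_inter (hiff.1 hKI) (hiff.1 hKJ))

lemma isSupIn_sum_union (I J : Finset ι) :
    IsSupIn S (subsetSums r) (∑ i ∈ I, r i) (∑ i ∈ J, r i) (∑ i ∈ I ∪ J, r i) := by
  have hiff := @sum_le_sum_iff_subset _ _ _ _ _ hnn hsum hbig
  refine ⟨sum_mem_subsetSums r _, hiff.2 subset_union_left, hiff.2 subset_union_right, ?_⟩
  rintro _ ⟨K, rfl⟩ hIK hJK
  exact hiff.2 (union_subset (hiff.1 hIK) (hiff.1 hJK))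

lemma disjoint_of_sum_le_one_sub_sum {I J : Finset ι}
    (h : ∑ i ∈ I, r i ≤ 1 - ∑ i ∈ J, r i) : Disjoint I J := by
  rw [← sum_compl_eq_one_sub hsum, sum_le_sum_iff_subset hnn hsum hbig] at h
  exact subset_compl_iff_disjoint_right.1 h

lemma isAlg_subsetSums : IsAlg S (subsetSums r) := by
  refine ⟨?_, ⟨∅, sum_empty.symm⟩, ?_, ?_⟩
  · rintro _ ⟨I, rfl⟩ s
    have hle := (sum_le_sum_iff_subset hnn hsum hbig).2 (subset_univ I)
    rw [hsum] at hle
    exact ⟨sum_nonneg (fun i _ => hnn i) s, hle s⟩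
  · rintro _ ⟨I, rfl⟩
    exact ⟨Iᶜ, (sum_compl_eq_one_sub hsum I).symm⟩
  · rintro _ _ _ ⟨I, rfl⟩ ⟨J, rfl⟩ ⟨K, rfl⟩ hIJ hJK hKI
    have dIJ := disjoint_of_sum_le_one_sub_sum hnn hsum hbig hIJ
    have dJK := disjoint_of_sum_le_one_sub_sum hnn hsum hbig hJK
    have dKI := disjoint_of_sum_le_one_sub_sum hnn hsum hbig hKI
    refine ⟨I ∪ J ∪ K, ?_⟩
    rw [sum_union (disjoint_union_left.2 ⟨dKI.symm, dJK⟩), sum_union dIJ]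

lemma isBooleanAlg_subsetSums : IsBooleanAlg S (subsetSums r) := by
  have hinf := isInfIn_sum_inter hnn hsum hbig
  have hsup := isSupIn_sum_union hnn hsum hbig
  refine ⟨isAlg_subsetSums hnn hsum hbig, ?_, ?_, ?_⟩
  · rintro _ ⟨I, rfl⟩ _ ⟨J, rfl⟩
    exact ⟨⟨_, hinf I J⟩, ⟨_, hsup I J⟩⟩
  · rintro _ ⟨I, rfl⟩ _ ⟨J, rfl⟩ _ ⟨K, rfl⟩ qr a pq pr b hqr ha hpq hpr hb
    rw [← (hsup J K).unique hqr] at ha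
    rw [← (hinf I J).unique hpq, ← (hinf I K).unique hpr] at hb
    rw [ha.unique (hinf I (J ∪ K)), hb.unique (hsup (I ∩ J) (I ∩ K)),
      inter_union_distrib_left]
  · rintro _ ⟨I, rfl⟩
    rw [← sum_compl_eq_one_sub hsum]
    have hbot := hinf I Iᶜ
    have htop := hsup I Iᶜ
    rw [inter_compl, sum_empty] at hbot
    rw [union_compl, hsum] at htop
    exact ⟨hbot, htop⟩

lemma ncard_subsetSums : (subsetSums r).ncard = 2 ^ Fintype.card ι := by
  have hrange : subsetSums r = Set.range fun I : Finset ι => ∑ i ∈ I, r i := by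
    ext f
    simp [subsetSums, eq_comm]
  have hinj : Function.Injective fun I : Finset ι => ∑ i ∈ I, r i := fun I J h =>
    (subset_of_sum_le_sum hnn hsum hbig h.le).antisymm (subset_of_sum_le_sum hnn hsum hbig h.ge)
  rw [hrange, Set.ncard_range_of_injective hinj, Nat.card_eq_fintype_card, Fintype.card_finset]

lemma not_mem_subsetSums {z : ι} {q : S → ℝ} (hle : q ≤ r z) (hne : q ≠ r z) (h0 : q ≠ 0) :
    q ∉ subsetSums r := by
  rintro ⟨I, rfl⟩
  have hI : I ⊆ {z} := subset_of_sum_le_sum hnn hsum hbig (by rwa [sum_singleton])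
  rcases subset_singleton_iff.1 hI with rfl | rfl
  · exact h0 sum_empty
  · exact hne (sum_singleton _ _)

end Partition

section Split

variable [DecidableEq ι] (p : ι → S → ℝ) (z : ι) (q : S → ℝ)

/-- The pieces `p` with `p z` cut into `q` (indexed by `none`) and `p z - q`. -/
def splitPiece : Option ι → S → ℝ :=
  fun o => o.elim q (p - Pi.single z q)

lemma sum_splitPiece_some (I : Finset ι) :
    ∑ i ∈ I, splitPiece p z q (some i) = ∑ i ∈ I, p i - if z ∈ I then q else 0 := by
  simp [splitPiece, sum_sub_distrib, sum_pi_single']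

lemma forall_splitPiece (P : (S → ℝ) → Prop) (hq : P q) (hpq : P (p z - q))
    (hp : ∀ i, P (p i)) (o : Option ι) : P (splitPiece p z q o) := by
  rcases o with _ | i
  · exact hq
  · by_cases hi : i = z
    · subst hi
      simpa [splitPiece] using hpq
    · simpa [splitPiece, hi] using hp i

lemma sum_splitPiece [Fintype ι] (hsum : ∑ i, p i = 1) : ∑ o, splitPiece p z q o = 1 := by
  rw [Fintype.sum_option, sum_splitPiece_some, hsum, if_pos (mem_univ z)]
  simp [splitPiece]

lemma subsetSums_subset_splitPiece : subsetSums p ⊆ subsetSums (splitPiece p z q) := by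
  rintro _ ⟨I, rfl⟩
  by_cases hz : z ∈ I
  · refine ⟨insertNone I, ?_⟩
    rw [sum_insertNone, sum_splitPiece_some, if_pos hz]
    simp [splitPiece]
  · refine ⟨I.map Function.Embedding.some, ?_⟩
    rw [sum_map, Function.Embedding.some_apply, sum_splitPiece_some, if_neg hz, sub_zero]

lemma mem_subsetSums_splitPiece : q ∈ subsetSums (splitPiece p z q) :=
  ⟨{none}, by simp [splitPiece]⟩

end Split

end SubsetSums

theorem stmt_16 {S : Type*} {n : ℕ} (hn : 2 ≤ n)
    (p : Fin n → (S → ℝ)) (hprob : ∀ i, IsProb S (p i))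
    (hvar : ∀ i, Varying S (p i)) (hsum : ∑ i, p i = 1)
    {q : S → ℝ} (hq : IsProb S q) (hqv : Varying S q)
    (hq1 : q ≤ p ⟨0, by omega⟩) (hqne : q ≠ p ⟨0, by omega⟩)
    (hd : Varying S (p ⟨0, by omega⟩ - q)) :
    q ∉ {f | ∃ I : Finset (Fin n), f = ∑ i ∈ I, p i} ∧
    ∃ Q : Set (S → ℝ), IsBooleanAlg S Q ∧ Q.ncard = 2 ^ (n + 1) ∧
      {f | ∃ I : Finset (Fin n), f = ∑ i ∈ I, p i} ∪ {q} ⊆ Q := by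
  set z : Fin n := ⟨0, by omega⟩
  have hnn : ∀ i, 0 ≤ p i := fun i s => (hprob i s).1
  have hbig : ∀ i, ∃ s, 1 / 2 < p i s := fun i => (hvar i).exists_half_lt
  have hq0 : q ≠ 0 := by
    rintro rfl
    obtain ⟨s, hs⟩ := hqv.exists_half_lt
    norm_num at hs
  have hnn' := forall_splitPiece p z q (0 ≤ ·) (fun s => (hq s).1) (sub_nonneg.2 hq1) hnn
  have hbig' := forall_splitPiece p z q (fun f => ∃ s, 1 / 2 < f s) hqv.exists_half_lt
    hd.exists_half_lt hbig
  have hsum' := sum_splitPiece p z q hsum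
  refine ⟨not_mem_subsetSums hnn hsum hbig hq1 hqne hq0, subsetSums (splitPiece p z q),
    isBooleanAlg_subsetSums hnn' hsum' hbig', ?_, ?_⟩
  · rw [ncard_subsetSums hnn' hsum' hbig', Fintype.card_option, Fintype.card_fin]
  · exact Set.union_subset (subsetSums_subset_splitPiece p z q)
      (Set.singleton_subset_iff.2 (mem_subsetSums_splitPiece p z q))
end

section
/- Let S have at most 3 elements and let P be an algebra of S-probabilities of type MO₂, say P = {0, p₁, 1 − p₁, p₂, 1 − p₂, 1}, and let g, h ∈ P be incomparable (neither g ≤ h nor h ≤ g). Then there do not exist an S-probability q ∉ P, a Boolean algebra Q of S-probabilities with P ∪ {q} ⊆ Q, and an element v ∈ Q such that 0 < q < g < v < 1 and 0 < q < h < v < 1 (where < denotes the strict pointwise order: a < b iff a ≤ b and a ≠ b). -/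
/-!
In a Boolean algebra `Q` of `S`-probabilities every nonzero `x` exceeds `1/2` at some state,
since otherwise `x ≤ 1 - x`, and then `x ≤ x ⊓ (1 - x) = 0`. Apply this to `q`, to `1 - v`, and
to `g ⊓ (1 - h)` and `h ⊓ (1 - g)`, which are nonzero by distributivity because `g` and `h` are
incomparable. This gives states where `(g, h)` lies above or below `1/2` in all four possible
combinations, so `S` has at least four elements.
-/

namespace IsBooleanAlg

variable {S : Type*} {Q : Set (S → ℝ)} {x g h m : S → ℝ}

theorem one_sub_mem (hQ : IsBooleanAlg S Q) (hx : x ∈ Q) : 1 - x ∈ Q :=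
  hQ.1.2.2.1 x hx

theorem isInfIn_one (hQ : IsBooleanAlg S Q) (hg : g ∈ Q) : IsInfIn S Q g 1 g :=
  ⟨hg, le_rfl, fun s => (hQ.1.1 g hg s).2, fun _ _ hu _ => hu⟩

theorem isSupIn_zero (hQ : IsBooleanAlg S Q) (hm : m ∈ Q) : IsSupIn S Q m 0 m :=
  ⟨hm, le_rfl, fun s => (hQ.1.1 m hm s).1, fun _ _ hu _ => hu⟩

theorem eq_zero_of_le_one_sub (hQ : IsBooleanAlg S Q) (hx : x ∈ Q) (hle : x ≤ 1 - x) :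
    x = 0 :=
  le_antisymm ((hQ.2.2.2 x hx).1.2.2.2 x hx le_rfl hle) fun s => (hQ.1.1 x hx s).1

theorem exists_half_lt (hQ : IsBooleanAlg S Q) (hx : x ∈ Q) (hx0 : x ≠ 0) :
    ∃ s, 1 / 2 < x s := by
  by_contra! hc
  refine hx0 (hQ.eq_zero_of_le_one_sub hx fun s => ?_)
  simp only [Pi.sub_apply, Pi.one_apply]
  linarith [hc s]

theorem exists_lt_half (hQ : IsBooleanAlg S Q) (hx : x ∈ Q) (hx1 : x ≠ 1) :
    ∃ s, x s < 1 / 2 := by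
  obtain ⟨s, hs⟩ := hQ.exists_half_lt (hQ.one_sub_mem hx) (sub_ne_zero.mpr hx1.symm)
  exact ⟨s, by simp only [Pi.sub_apply, Pi.one_apply] at hs; linarith⟩

/-- `g = g ⊓ (h ⊔ (1 - h)) = (g ⊓ h) ⊔ (g ⊓ (1 - h)) = g ⊓ h`. -/
theorem le_of_isInfIn_one_sub_zero (hQ : IsBooleanAlg S Q) (hg : g ∈ Q) (hh : h ∈ Q)
    (h0 : IsInfIn S Q g (1 - h) 0) : g ≤ h := by
  obtain ⟨m, hm⟩ := (hQ.2.1 g hg h hh).1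
  have hgm : g = m := hQ.2.2.1 g hg h hh _ (hQ.one_sub_mem hh) 1 g m 0 m
    (hQ.2.2.2 h hh).2 (hQ.isInfIn_one hg) hm h0 (hQ.isSupIn_zero hm.1)
  exact hgm ▸ hm.2.2.1

theorem exists_lt_half_lt_of_not_le (hQ : IsBooleanAlg S Q) (hg : g ∈ Q) (hh : h ∈ Q)
    (hgh : ¬g ≤ h) : ∃ s, h s < 1 / 2 ∧ 1 / 2 < g s := by
  obtain ⟨a, ha⟩ := (hQ.2.1 g hg (1 - h) (hQ.one_sub_mem hh)).1
  have ha0 : a ≠ 0 := by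
    rintro rfl
    exact hgh (hQ.le_of_isInfIn_one_sub_zero hg hh ha)
  obtain ⟨s, hs⟩ := hQ.exists_half_lt ha.1 ha0
  have hah := ha.2.2.1 s
  simp only [Pi.sub_apply, Pi.one_apply] at hah
  exact ⟨s, by linarith, hs.trans_le (ha.2.1 s)⟩

end IsBooleanAlg

theorem stmt_17_general {S : Type*} [Finite S] (hS : Nat.card S ≤ 3)
    {P : Set (S → ℝ)}
    {g h : S → ℝ} (hg : g ∈ P) (hh : h ∈ P) (hgh1 : ¬g ≤ h) (hgh2 : ¬h ≤ g) :
    ¬∃ (q : S → ℝ) (Q : Set (S → ℝ)) (v : S → ℝ),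
      q ∉ P ∧ IsBooleanAlg S Q ∧ P ∪ {q} ⊆ Q ∧ v ∈ Q ∧
      0 < q ∧ q < g ∧ g < v ∧ q < h ∧ h < v ∧ v < 1 := by
  rintro ⟨q, Q, v, -, hQ, hsub, hvQ, h0q, hqg, hgv, hqh, hhv, hv1⟩
  have hgQ : g ∈ Q := hsub (Or.inl hg)
  have hhQ : h ∈ Q := hsub (Or.inl hh)
  obtain ⟨s₁, hs₁⟩ := hQ.exists_half_lt (hsub (Or.inr rfl)) h0q.ne'
  obtain ⟨s₂, hs₂⟩ := hQ.exists_lt_half hvQ hv1.ne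
  obtain ⟨s₃, hs₃h, hs₃g⟩ := hQ.exists_lt_half_lt_of_not_le hgQ hhQ hgh1
  obtain ⟨s₄, hs₄g, hs₄h⟩ := hQ.exists_lt_half_lt_of_not_le hhQ hgQ hgh2
  let pattern : S → Bool × Bool := fun s => (decide (1 / 2 < g s), decide (1 / 2 < h s))
  have hpattern : Function.Surjective pattern := by
    rintro ⟨_ | _, _ | _⟩
    · exact ⟨s₂, Prod.ext (decide_eq_false ((hgv.le s₂).trans hs₂.le).not_gt)
        (decide_eq_false ((hhv.le s₂).trans hs₂.le).not_gt)⟩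
    · exact ⟨s₄, Prod.ext (decide_eq_false hs₄g.not_gt) (decide_eq_true hs₄h)⟩
    · exact ⟨s₃, Prod.ext (decide_eq_true hs₃g) (decide_eq_false hs₃h.not_gt)⟩
    · exact ⟨s₁, Prod.ext (decide_eq_true (hs₁.trans_le (hqg.le s₁)))
        (decide_eq_true (hs₁.trans_le (hqh.le s₁)))⟩
  have hcard := Nat.card_le_card_of_surjective pattern hpattern
  rw [Nat.card_prod, Nat.card_eq_fintype_card, Fintype.card_bool] at hcard
  omega

theorem stmt_17 {S : Type*} [Nonempty S] [Finite S] (hS : Nat.card S ≤ 3)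
    {P : Set (S → ℝ)} {p1 p2 : S → ℝ} (hMO : IsMO2 S P p1 p2)
    {g h : S → ℝ} (hg : g ∈ P) (hh : h ∈ P) (hgh1 : ¬g ≤ h) (hgh2 : ¬h ≤ g) :
    ¬∃ (q : S → ℝ) (Q : Set (S → ℝ)) (v : S → ℝ),
      q ∉ P ∧ IsBooleanAlg S Q ∧ P ∪ {q} ⊆ Q ∧ v ∈ Q ∧
      0 < q ∧ q < g ∧ g < v ∧ q < h ∧ h < v ∧ v < 1 :=
  stmt_17_general hS hg hh hgh1 hgh2
end
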